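/- Let u : ℝ² → ℝ be smooth with variables x, y, and suppose u satisfies the sine-Gordon equation u_xy = sin u. Then the conservation law D_x( (1/2)u_x²·cos u + u_xx·(u_xy − sin u) ) = D_y( −(1/8)u_x⁴ + (1/2)u_xx² ) holds; equivalently, ∂_x( (1/2)u_x² cos u ) = ∂_y( −(1/8)u_x⁴ + (1/2)u_xx² ). -/

import Mathlib

/-- Total derivative with respect to the first variable `x`. -/
noncomputable def Dx (f : ℝ → ℝ → ℝ) : ℝ → ℝ → ℝ := fun x y => deriv (fun s => f s y) x

/-- Total derivative with respect to the second variable `y`. -/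
noncomputable def Dy (f : ℝ → ℝ → ℝ) : ℝ → ℝ → ℝ := fun x y => deriv (fun t => f x t) y

section helpers

variable {f : ℝ → ℝ → ℝ}

private lemma hasDerivAt_X (hf : ContDiff ℝ (⊤ : ℕ∞) fun p : ℝ × ℝ => f p.1 p.2) (x y : ℝ) :
    HasDerivAt (fun s => f s y) (Dx f x y) x := by
  have h : Differentiable ℝ (fun s : ℝ => f s y) :=
    (hf.differentiable (by simp)).comp (differentiable_id.prodMk (differentiable_const y))
  exact (h.differentiableAt).hasDerivAt

private lemma hasDerivAt_Y (hf : ContDiff ℝ (⊤ : ℕ∞) fun p : ℝ × ℝ => f p.1 p.2) (x y : ℝ) :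
    HasDerivAt (fun t => f x t) (Dy f x y) y := by
  have h : Differentiable ℝ (fun t : ℝ => f x t) :=
    (hf.differentiable (by simp)).comp ((differentiable_const x).prodMk differentiable_id)
  exact (h.differentiableAt).hasDerivAt

private lemma keyX (hf : ContDiff ℝ (⊤ : ℕ∞) fun p : ℝ × ℝ => f p.1 p.2) (x y : ℝ) :
    Dx f x y = fderiv ℝ (fun p : ℝ × ℝ => f p.1 p.2) (x, y) ((1 : ℝ), (0 : ℝ)) := by
  have h1 : HasDerivAt (fun s : ℝ => ((s, y) : ℝ × ℝ)) ((1 : ℝ), (0 : ℝ)) x :=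
    (hasDerivAt_id x).prodMk (hasDerivAt_const x y)
  have h2 := ((hf.differentiable (by simp)) ((x, y) : ℝ × ℝ)).hasFDerivAt
  have h3 := h2.comp_hasDerivAt x h1
  exact (hasDerivAt_X hf x y).unique h3

private lemma keyY (hf : ContDiff ℝ (⊤ : ℕ∞) fun p : ℝ × ℝ => f p.1 p.2) (x y : ℝ) :
    Dy f x y = fderiv ℝ (fun p : ℝ × ℝ => f p.1 p.2) (x, y) ((0 : ℝ), (1 : ℝ)) := by
  have h1 : HasDerivAt (fun t : ℝ => ((x, t) : ℝ × ℝ)) ((0 : ℝ), (1 : ℝ)) y :=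
    (hasDerivAt_const y x).prodMk (hasDerivAt_id y)
  have h2 := ((hf.differentiable (by simp)) ((x, y) : ℝ × ℝ)).hasFDerivAt
  have h3 := h2.comp_hasDerivAt y h1
  exact (hasDerivAt_Y hf x y).unique h3

private lemma contDiff_Dx (hf : ContDiff ℝ (⊤ : ℕ∞) fun p : ℝ × ℝ => f p.1 p.2) :
    ContDiff ℝ (⊤ : ℕ∞) fun p : ℝ × ℝ => Dx f p.1 p.2 := by
  have h : ContDiff ℝ (⊤ : ℕ∞) fun p : ℝ × ℝ =>
      fderiv ℝ (fun q : ℝ × ℝ => f q.1 q.2) p ((1 : ℝ), (0 : ℝ)) :=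
    (hf.fderiv_right (by simp)).clm_apply contDiff_const
  have e : (fun p : ℝ × ℝ => Dx f p.1 p.2) = fun p : ℝ × ℝ =>
      fderiv ℝ (fun q : ℝ × ℝ => f q.1 q.2) p ((1 : ℝ), (0 : ℝ)) :=
    funext fun p => keyX hf p.1 p.2
  rw [e]; exact h

private lemma contDiff_Dy (hf : ContDiff ℝ (⊤ : ℕ∞) fun p : ℝ × ℝ => f p.1 p.2) :
    ContDiff ℝ (⊤ : ℕ∞) fun p : ℝ × ℝ => Dy f p.1 p.2 := by
  have h : ContDiff ℝ (⊤ : ℕ∞) fun p : ℝ × ℝ =>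
      fderiv ℝ (fun q : ℝ × ℝ => f q.1 q.2) p ((0 : ℝ), (1 : ℝ)) :=
    (hf.fderiv_right (by simp)).clm_apply contDiff_const
  have e : (fun p : ℝ × ℝ => Dy f p.1 p.2) = fun p : ℝ × ℝ =>
      fderiv ℝ (fun q : ℝ × ℝ => f q.1 q.2) p ((0 : ℝ), (1 : ℝ)) :=
    funext fun p => keyY hf p.1 p.2
  rw [e]; exact h

private lemma snd_deriv_apply (hf : ContDiff ℝ (⊤ : ℕ∞) fun p : ℝ × ℝ => f p.1 p.2)
    (x y : ℝ) (v w : ℝ × ℝ) :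
    fderiv ℝ (fun p : ℝ × ℝ => fderiv ℝ (fun q : ℝ × ℝ => f q.1 q.2) p v) (x, y) w =
      fderiv ℝ (fderiv ℝ fun q : ℝ × ℝ => f q.1 q.2) (x, y) w v := by
  have hc : DifferentiableAt ℝ (fderiv ℝ fun q : ℝ × ℝ => f q.1 q.2) ((x, y) : ℝ × ℝ) :=
    ((hf.fderiv_right (m := (⊤ : ℕ∞)) (by simp)).differentiable (by simp)).differentiableAt
  rw [fderiv_clm_apply hc (differentiableAt_const v)]
  simp

private lemma clairaut (hf : ContDiff ℝ (⊤ : ℕ∞) fun p : ℝ × ℝ => f p.1 p.2) (x y : ℝ) :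
    Dy (Dx f) x y = Dx (Dy f) x y := by
  set F : ℝ × ℝ → ℝ := fun q => f q.1 q.2 with hF
  have hsymm : ∀ v w : ℝ × ℝ,
      fderiv ℝ (fderiv ℝ F) (x, y) v w = fderiv ℝ (fderiv ℝ F) (x, y) w v := by
    intro v w
    exact second_derivative_symmetric
      (fun z => ((hf.differentiable (by simp)) z).hasFDerivAt)
      (((hf.fderiv_right (m := (⊤ : ℕ∞)) (by simp)).differentiable (by simp)).differentiableAt.hasFDerivAt) v w
  have e1 : Dy (Dx f) x y =
      fderiv ℝ (fun p : ℝ × ℝ => Dx f p.1 p.2) (x, y) ((0 : ℝ), (1 : ℝ)) :=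
    keyY (contDiff_Dx hf) x y
  have e2 : Dx (Dy f) x y =
      fderiv ℝ (fun p : ℝ × ℝ => Dy f p.1 p.2) (x, y) ((1 : ℝ), (0 : ℝ)) :=
    keyX (contDiff_Dy hf) x y
  have r1 : (fun p : ℝ × ℝ => Dx f p.1 p.2) = fun p : ℝ × ℝ => fderiv ℝ F p ((1 : ℝ), (0 : ℝ)) :=
    funext fun p => keyX hf p.1 p.2
  have r2 : (fun p : ℝ × ℝ => Dy f p.1 p.2) = fun p : ℝ × ℝ => fderiv ℝ F p ((0 : ℝ), (1 : ℝ)) :=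
    funext fun p => keyY hf p.1 p.2
  rw [e1, e2, r1, r2, snd_deriv_apply hf x y, snd_deriv_apply hf x y,
    hsymm ((0 : ℝ), (1 : ℝ)) ((1 : ℝ), (0 : ℝ))]

end helpers

/-- Noether conservation law for the mKdV variational symmetry of sine-Gordon:
if `u_xy = sin u` then
`D_x((1/2)u_x² cos u + u_xx(u_xy - sin u)) = D_y(-(1/8)u_x⁴ + (1/2)u_xx²)`,
equivalently `∂_x((1/2)u_x² cos u) = ∂_y(-(1/8)u_x⁴ + (1/2)u_xx²)`. -/
theorem stmt_2 (u : ℝ → ℝ → ℝ)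
    (hu : ContDiff ℝ (⊤ : ℕ∞) fun p : ℝ × ℝ => u p.1 p.2)
    (hSG : ∀ x y, Dy (Dx u) x y = Real.sin (u x y))
    (P Q R : ℝ → ℝ → ℝ)
    (hP : ∀ x y, P x y = (1/2) * (Dx u x y)^2 * Real.cos (u x y)
          + Dx (Dx u) x y * (Dy (Dx u) x y - Real.sin (u x y)))
    (hQ : ∀ x y, Q x y = -(1/8) * (Dx u x y)^4 + (1/2) * (Dx (Dx u) x y)^2)
    (hR : ∀ x y, R x y = (1/2) * (Dx u x y)^2 * Real.cos (u x y)) :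
    (∀ x y, Dx P x y = Dy Q x y) ∧ (∀ x y, Dx R x y = Dy Q x y) := by
  have ha : ContDiff ℝ (⊤ : ℕ∞) fun p : ℝ × ℝ => Dx u p.1 p.2 := contDiff_Dx hu
  have hb : ContDiff ℝ (⊤ : ℕ∞) fun p : ℝ × ℝ => Dx (Dx u) p.1 p.2 := contDiff_Dx ha
  -- mixed third derivative via Clairaut and the equation
  have hDyb : ∀ x y, Dy (Dx (Dx u)) x y = Real.cos (u x y) * Dx u x y := by
    intro x y
    rw [clairaut ha x y]
    have hfun : (fun s => Dy (Dx u) s y) = fun s => Real.sin (u s y) :=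
      funext fun s => hSG s y
    show deriv (fun s => Dy (Dx u) s y) x = _
    rw [hfun]
    exact ((hasDerivAt_X hu x y).sin).deriv
  -- the main computation : Dx R = Dy Q
  have main : ∀ x y, Dx R x y = Dy Q x y := by
    intro x y
    have h1 : HasDerivAt (fun s => Dx u s y) (Dx (Dx u) x y) x := hasDerivAt_X ha x y
    have h2 : HasDerivAt (fun s => u s y) (Dx u x y) x := hasDerivAt_X hu x y
    have h3 : HasDerivAt (fun t => Dx u x t) (Real.sin (u x y)) y := by
      have := hasDerivAt_Y ha x y; rwa [hSG x y] at this
    have h4 : HasDerivAt (fun t => Dx (Dx u) x t) (Real.cos (u x y) * Dx u x y) y := by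
      have := hasDerivAt_Y hb x y; rwa [hDyb x y] at this
    have e1 : (fun s => R s y) = fun s => 1/2 * Dx u s y ^ 2 * Real.cos (u s y) :=
      funext fun s => hR s y
    have e2 : (fun t => Q x t) = fun t => -(1/8) * Dx u x t ^ 4 + 1/2 * Dx (Dx u) x t ^ 2 :=
      funext fun t => hQ x t
    show deriv (fun s => R s y) x = deriv (fun t => Q x t) y
    rw [e1, e2, (((h1.fun_pow 2).const_mul (1/2 : ℝ)).fun_mul h2.cos).deriv,
      (((h3.fun_pow 4).const_mul (-(1/8) : ℝ)).fun_add ((h4.fun_pow 2).const_mul (1/2 : ℝ))).deriv]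
    push_cast
    ring
  refine ⟨?_, main⟩
  have hPR : P = R := by
    funext x y
    rw [hP x y, hR x y, hSG x y]
    ring
  intro x y
  rw [hPR]
  exact main x y
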